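/- Maupertuis value of the circular-arc modification of the collision-ejection solution: let T > 0, m₁ > 0, α ∈ [1,2), φ ∈ (0, 2π], and let x̄ be the collision-ejection solution with φ₋ = 0, φ₊ = φ. For ρ > 0 set t_ρ = μ^{−1} ρ^{(2+α)/2} and ω_ρ = φ/(2 t_ρ), and define x_ρ(t) = x̄(t) for t ∈ [−T, −t_ρ] ∪ [t_ρ, T] and x_ρ(t) = ρ·e^{i ω_ρ (t + t_ρ)} for t ∈ [−t_ρ, t_ρ]. Then there exist C > 0 and ρ₀ > 0 such that |M̄(x_ρ) − M̄(x̄)| ≤ C·ρ^{(2−α)/2} for all ρ ∈ (0, ρ₀); in particular M̄(x_ρ) → M̄(x̄) as ρ → 0⁺. -/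

import Mathlib

/-!
Off `[-t_ρ, t_ρ]` the curves `x_ρ` and `x̄` coincide, and both densities of `x̄`, the kinetic
`½|x̄'|²` and the potential `V̄(x̄)`, are constant multiples of `|t|^{-2α/(α+2)}`, which is
integrable because `α < 2`. On `[-t_ρ, t_ρ]` they are replaced by the constant densities of the
circular arc: this removes a multiple of `t_ρ^{(2-α)/(α+2)}` from each integral and adds
`ρ²φ²/(4t_ρ)`, resp. `2t_ρ m₁/(αρ^α)`, all of which are constant multiples of `ρ^{(2-α)/2}`.
So as soon as `t_ρ < T`, each factor of `M̄(x_ρ)` is the corresponding factor of `M̄(x̄)` plus a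
multiple of `ρ^{(2-α)/2}`, exactly.
-/

open Filter Topology MeasureTheory

/-- `μ = (α+2)·√(m₁/(2α))`. -/
noncomputable def muKepler (m₁ α : ℝ) : ℝ := (α + 2) * Real.sqrt (m₁ / (2 * α))

/-- The parabolic collision-ejection solution with angles `φ₋` (for `t ≤ 0`) and
`φ₊` (for `t ≥ 0`). -/
noncomputable def xbarCE (m₁ α φm φp : ℝ) (t : ℝ) : ℂ :=
  (((muKepler m₁ α * |t|) ^ (2 / (α + 2)) : ℝ) : ℂ) *
    Complex.exp (((if 0 ≤ t then φp else φm : ℝ) : ℂ) * Complex.I)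

/-- `t_ρ = μ⁻¹ ρ^{(2+α)/2}`. -/
noncomputable def tRho (m₁ α ρ : ℝ) : ℝ := ρ ^ ((2 + α) / 2) / muKepler m₁ α

/-- The circular-arc modification of the collision-ejection solution `xbarCE m₁ α 0 φ`:
on `[-t_ρ, t_ρ]` it is the circular arc `ρ·e^{iω_ρ(t+t_ρ)}` with `ω_ρ = φ/(2t_ρ)`, and
elsewhere it coincides with the collision-ejection solution. -/
noncomputable def xRho (m₁ α φ ρ : ℝ) (t : ℝ) : ℂ :=
  if |t| ≤ tRho m₁ α ρ then
    (ρ : ℂ) * Complex.exp (((φ / (2 * tRho m₁ α ρ) * (t + tRho m₁ α ρ) : ℝ) : ℂ) * Complex.I)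
  else xbarCE m₁ α 0 φ t

/-- The zero-energy Maupertuis functional on `[-T, T]`. -/
noncomputable def MbarFun (m₁ α T : ℝ) (x : ℝ → ℂ) : ℝ :=
  (∫ t in (-T)..T, (1 / 2) * ‖deriv x t‖ ^ 2) * (∫ t in (-T)..T, m₁ / (α * ‖x t‖ ^ α))

open intervalIntegral Set

lemma intervalIntegrable_abs_rpow {r : ℝ} (hr : -1 < r) (a b : ℝ) :
    IntervalIntegrable (fun t : ℝ => |t| ^ r) volume a b := by
  have hpos : ∀ c, 0 ≤ c → IntervalIntegrable (fun t : ℝ => |t| ^ r) volume 0 c := fun c hc =>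
    (intervalIntegrable_rpow' hr).congr_uIoo fun t ht => by
      rw [uIoo_of_le hc] at ht
      simp [abs_of_pos ht.1]
  have hzero : ∀ c, IntervalIntegrable (fun t : ℝ => |t| ^ r) volume 0 c := by
    intro c
    rcases le_total 0 c with hc | hc
    · exact hpos c hc
    · simpa using (IntervalIntegrable.iff_comp_neg).mp (hpos (-c) (neg_nonneg.2 hc))
  exact (hzero a).symm.trans (hzero b)

lemma integral_abs_rpow_sub_one {p τ : ℝ} (hp : 0 < p) (hτ : 0 ≤ τ) :
    ∫ t in (-τ)..τ, |t| ^ (p - 1) = 2 * τ ^ p / p := by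
  have hp' : -1 < p - 1 := by linarith
  have hhalf : ∫ t in (0 : ℝ)..τ, |t| ^ (p - 1) = τ ^ p / p := by
    rw [integral_congr_Ioo_of_le hτ (g := fun t => t ^ (p - 1)) fun t ht => by
        simp [abs_of_pos ht.1],
      integral_rpow (Or.inl hp'), sub_add_cancel, Real.zero_rpow hp.ne', sub_zero]
  have hsymm : ∫ t in (-τ)..0, |t| ^ (p - 1) = ∫ t in (0 : ℝ)..τ, |t| ^ (p - 1) := by
    simpa using (integral_comp_neg (a := 0) (b := τ) fun t => |t| ^ (p - 1)).symm
  rw [← integral_add_adjacent_intervals (intervalIntegrable_abs_rpow hp' _ _)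
    (intervalIntegrable_abs_rpow hp' _ _), hsymm, hhalf]
  ring

lemma integral_eq_of_eqOn_abs {F g : ℝ → ℝ} {A τ T : ℝ} (hτ : 0 < τ) (hτT : τ < T)
    (hg : ∀ a b, IntervalIntegrable g volume a b)
    (hout : ∀ t, τ < |t| → F t = g t) (hin : ∀ t, |t| < τ → F t = A) :
    ∫ t in (-T)..T, F t = (∫ t in (-T)..T, g t) - (∫ t in (-τ)..τ, g t) + 2 * τ * A := by
  have hleft : EqOn F g (Ioo (-T) (-τ)) := fun t ht =>
    hout t (by rw [abs_of_neg (by linarith [ht.2])]; linarith [ht.2])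
  have hmid : EqOn F (fun _ => A) (Ioo (-τ) τ) := fun t ht => hin t (abs_lt.2 ht)
  have hright : EqOn F g (Ioo τ T) := fun t ht =>
    hout t (by rw [abs_of_pos (hτ.trans ht.1)]; exact ht.1)
  have hF₁ : IntervalIntegrable F volume (-T) (-τ) :=
    (hg _ _).congr_uIoo (by rw [uIoo_of_le (by linarith)]; exact hleft.symm)
  have hF₂ : IntervalIntegrable F volume (-τ) τ :=
    intervalIntegrable_const.congr_uIoo (by rw [uIoo_of_le (by linarith)]; exact hmid.symm)
  have hF₃ : IntervalIntegrable F volume τ T :=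
    (hg _ _).congr_uIoo (by rw [uIoo_of_le hτT.le]; exact hright.symm)
  rw [← integral_add_adjacent_intervals (hF₁.trans hF₂) hF₃,
    ← integral_add_adjacent_intervals hF₁ hF₂,
    ← integral_add_adjacent_intervals ((hg (-T) (-τ)).trans (hg (-τ) τ)) (hg τ T),
    ← integral_add_adjacent_intervals (hg (-T) (-τ)) (hg (-τ) τ),
    integral_congr_Ioo_of_le (by linarith) hleft, integral_congr_Ioo_of_le (by linarith) hmid,
    integral_congr_Ioo_of_le hτT.le hright, intervalIntegral.integral_const, smul_eq_mul]
  ring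

lemma integral_eq_of_eqOn_abs_rpow {F : ℝ → ℝ} {c p A τ T : ℝ} (hp : 0 < p) (hτ : 0 < τ)
    (hτT : τ < T) (hout : ∀ t, τ < |t| → F t = c * |t| ^ (p - 1))
    (hin : ∀ t, |t| < τ → F t = A) :
    ∫ t in (-T)..T, F t = (∫ t in (-T)..T, c * |t| ^ (p - 1)) - 2 * c * τ ^ p / p + 2 * τ * A := by
  have hg a b : IntervalIntegrable (fun t => c * |t| ^ (p - 1)) volume a b :=
    (intervalIntegrable_abs_rpow (by linarith) a b).const_mul c
  rw [integral_eq_of_eqOn_abs hτ hτT hg hout hin,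
    intervalIntegral.integral_const_mul c _ (a := -τ), integral_abs_rpow_sub_one hp hτ.le]
  ring

lemma exists_abs_sub_le_rpow_of_eq_mul {f : ℝ → ℝ} {K P a b s ρ₁ : ℝ} (hs : 0 ≤ s)
    (hρ₁ : 0 < ρ₁) (hf : ∀ ρ, 0 < ρ → ρ < ρ₁ → f ρ = (K + a * ρ ^ s) * (P + b * ρ ^ s)) :
    ∃ C, 0 < C ∧ ∃ ρ₀, 0 < ρ₀ ∧ ∀ ρ, 0 < ρ → ρ < ρ₀ → |f ρ - K * P| ≤ C * ρ ^ s := by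
  refine ⟨|a * P + b * K| + |a * b| + 1, by positivity, min 1 ρ₁, lt_min one_pos hρ₁,
    fun ρ hρ hρ₀ => ?_⟩
  rw [hf ρ hρ (hρ₀.trans_le (min_le_right _ _))]
  have hr₀ : 0 ≤ ρ ^ s := Real.rpow_nonneg hρ.le s
  have hr₁ : ρ ^ s ≤ 1 := Real.rpow_le_one hρ.le (hρ₀.trans_le (min_le_left _ _)).le hs
  calc |(K + a * ρ ^ s) * (P + b * ρ ^ s) - K * P|
      = |(a * P + b * K) * ρ ^ s + a * b * ρ ^ s * ρ ^ s| := by ring_nf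
    _ ≤ |a * P + b * K| * ρ ^ s + |a * b| * ρ ^ s * ρ ^ s := by
      refine (abs_add_le _ _).trans ?_
      simp only [abs_mul, abs_of_nonneg hr₀, le_refl]
    _ ≤ (|a * P + b * K| + |a * b| + 1) * ρ ^ s := by
      have := mul_le_mul_of_nonneg_left hr₁ (mul_nonneg (abs_nonneg (a * b)) hr₀)
      linarith

lemma tendsto_of_abs_sub_le_rpow {f : ℝ → ℝ} {L C s ρ₀ : ℝ} (hs : 0 < s) (hρ₀ : 0 < ρ₀)
    (h : ∀ ρ, 0 < ρ → ρ < ρ₀ → |f ρ - L| ≤ C * ρ ^ s) : Tendsto f (𝓝[>] 0) (𝓝 L) := by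
  have hlim : Tendsto (fun ρ : ℝ => C * ρ ^ s) (𝓝[>] 0) (𝓝 0) := by
    simpa [Real.zero_rpow hs.ne'] using
      ((Real.continuousAt_rpow_const 0 s (Or.inr hs.le)).tendsto.const_mul C).mono_left
        nhdsWithin_le_nhds
  refine tendsto_iff_norm_sub_tendsto_zero.2 (squeeze_zero' ?_ ?_ hlim)
  · exact Eventually.of_forall fun ρ => norm_nonneg _
  · filter_upwards [Ioo_mem_nhdsGT hρ₀] with ρ hρ
    exact h ρ hρ.1 hρ.2

section Kepler

variable {m₁ α : ℝ}

lemma muKepler_pos (hm : 0 < m₁) (hα : 0 < α) : 0 < muKepler m₁ α :=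
  mul_pos (by linarith) (Real.sqrt_pos.2 (by positivity))

lemma norm_xbarCE (hm : 0 < m₁) (hα : 0 < α) (φm φp t : ℝ) :
    ‖xbarCE m₁ α φm φp t‖ = (muKepler m₁ α * |t|) ^ (2 / (α + 2)) := by
  have hμ := muKepler_pos hm hα
  rw [xbarCE, norm_mul, Complex.norm_real, Complex.norm_exp_ofReal_mul_I, mul_one,
    Real.norm_of_nonneg (by positivity)]

lemma norm_deriv_xbarCE (hm : 0 < m₁) (hα : 0 < α) (φm φp : ℝ) {t : ℝ} (ht : t ≠ 0) :
    ‖deriv (xbarCE m₁ α φm φp) t‖ =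
      2 / (α + 2) * muKepler m₁ α ^ (2 / (α + 2)) * |t| ^ (2 / (α + 2) - 1) := by
  set μ := muKepler m₁ α
  set q := 2 / (α + 2)
  have hμ : 0 < μ := muKepler_pos hm hα
  have hq : 0 < q := by positivity
  have hsign : ∀ᶠ s in 𝓝 t, (0 ≤ s ↔ 0 ≤ t) := by
    rcases ht.lt_or_gt with h | h
    · filter_upwards [eventually_lt_nhds h] with s hs
      simp [hs.not_ge, h.not_ge]
    · filter_upwards [eventually_gt_nhds h] with s hs
      simp [hs.le, h.le]
  have hloc : xbarCE m₁ α φm φp =ᶠ[𝓝 t] fun s => (((μ * |s|) ^ q : ℝ) : ℂ) *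
      Complex.exp (((if 0 ≤ t then φp else φm : ℝ) : ℂ) * Complex.I) := by
    filter_upwards [hsign] with s hs
    simp only [xbarCE, hs, μ, q]
  have hr : HasDerivAt (fun s => (μ * |s|) ^ q)
      (μ * SignType.sign t * q * (μ * |t|) ^ (q - 1)) t :=
    ((hasDerivAt_abs ht).const_mul μ).rpow_const (Or.inl (by positivity))
  rw [((hr.ofReal_comp.mul_const _).congr_of_eventuallyEq hloc).deriv, norm_mul,
    Complex.norm_real, Complex.norm_exp_ofReal_mul_I, mul_one, Real.norm_eq_abs,
    Real.mul_rpow hμ.le (abs_nonneg t), Real.rpow_sub_one hμ.ne']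
  have hsgn : |(SignType.sign t : ℝ)| = 1 := by
    rcases ht.lt_or_gt with h | h <;> simp [h]
  rw [abs_mul, abs_mul, abs_mul, hsgn, abs_of_pos hμ, abs_of_pos hq,
    abs_of_nonneg (by positivity)]
  field_simp

lemma half_mul_norm_deriv_xbarCE_sq (hm : 0 < m₁) (hα : 0 < α) (φm φp : ℝ) {t : ℝ}
    (ht : t ≠ 0) :
    1 / 2 * ‖deriv (xbarCE m₁ α φm φp) t‖ ^ 2 =
      (2 / (α + 2)) ^ 2 * muKepler m₁ α ^ (4 / (α + 2)) / 2 * |t| ^ ((2 - α) / (α + 2) - 1) := by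
  have hμ := muKepler_pos hm hα
  rw [norm_deriv_xbarCE hm hα φm φp ht, mul_pow, mul_pow, ← Real.rpow_mul_natCast hμ.le,
    ← Real.rpow_mul_natCast (abs_nonneg t)]
  have h₁ : 2 / (α + 2) * ((2 : ℕ) : ℝ) = 4 / (α + 2) := by push_cast; ring
  have h₂ : (2 / (α + 2) - 1) * ((2 : ℕ) : ℝ) = (2 - α) / (α + 2) - 1 := by
    push_cast; field_simp; ring
  rw [h₁, h₂]
  ring

lemma div_mul_norm_xbarCE_rpow (hm : 0 < m₁) (hα : 0 < α) (φm φp t : ℝ) :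
    m₁ / (α * ‖xbarCE m₁ α φm φp t‖ ^ α) =
      m₁ / (α * muKepler m₁ α ^ (2 * α / (α + 2))) * |t| ^ ((2 - α) / (α + 2) - 1) := by
  have hμ := muKepler_pos hm hα
  have hexp : (2 - α) / (α + 2) - 1 = -(2 * α / (α + 2)) := by field_simp; ring
  rw [norm_xbarCE hm hα, ← Real.rpow_mul (by positivity), Real.mul_rpow hμ.le (abs_nonneg t),
    hexp, Real.rpow_neg (abs_nonneg t), show 2 / (α + 2) * α = 2 * α / (α + 2) by ring]
  simp only [div_eq_mul_inv, mul_inv]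
  ring


lemma tRho_pos (hm : 0 < m₁) (hα : 0 < α) {ρ : ℝ} (hρ : 0 < ρ) : 0 < tRho m₁ α ρ :=
  div_pos (Real.rpow_pos_of_pos hρ _) (muKepler_pos hm hα)

lemma tRho_lt_of_lt_rpow (hm : 0 < m₁) (hα : 0 < α) {ρ T : ℝ} (hT : 0 < T) (hρ : 0 ≤ ρ)
    (hρT : ρ < (muKepler m₁ α * T) ^ (2 / (α + 2))) : tRho m₁ α ρ < T := by
  have hμ := muKepler_pos hm hα
  rw [tRho, div_lt_iff₀ hμ]
  calc ρ ^ ((2 + α) / 2) < ((muKepler m₁ α * T) ^ (2 / (α + 2))) ^ ((2 + α) / 2) :=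
        Real.rpow_lt_rpow hρ hρT (by positivity)
    _ = T * muKepler m₁ α := by
      rw [← Real.rpow_mul (by positivity), show 2 / (α + 2) * ((2 + α) / 2) = 1 by field_simp; ring,
        Real.rpow_one, mul_comm]

lemma tRho_rpow (hm : 0 < m₁) (hα : 0 < α) {ρ : ℝ} (hρ : 0 ≤ ρ) :
    tRho m₁ α ρ ^ ((2 - α) / (α + 2)) =
      ρ ^ ((2 - α) / 2) / muKepler m₁ α ^ ((2 - α) / (α + 2)) := by
  rw [tRho, Real.div_rpow (by positivity) (muKepler_pos hm hα).le, ← Real.rpow_mul hρ]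
  congr 2
  field_simp
  ring

lemma sq_div_tRho {ρ : ℝ} (hρ : 0 < ρ) :
    ρ ^ 2 / tRho m₁ α ρ = muKepler m₁ α * ρ ^ ((2 - α) / 2) := by
  have h : ρ ^ ((2 - α) / 2) = ρ ^ (2 : ℝ) / ρ ^ ((2 + α) / 2) := by
    rw [← Real.rpow_sub hρ]
    ring_nf
  rw [tRho, h, Real.rpow_two]
  field_simp

lemma tRho_div_rpow {ρ : ℝ} (hρ : 0 < ρ) :
    tRho m₁ α ρ / ρ ^ α = ρ ^ ((2 - α) / 2) / muKepler m₁ α := by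
  have h : ρ ^ ((2 - α) / 2) = ρ ^ ((2 + α) / 2) / ρ ^ α := by
    rw [← Real.rpow_sub hρ]
    ring_nf
  rw [tRho, h, div_right_comm]

end Kepler

section Arc

variable {m₁ α φ ρ t : ℝ}

lemma xRho_of_lt_abs (ht : tRho m₁ α ρ < |t|) : xRho m₁ α φ ρ t = xbarCE m₁ α 0 φ t :=
  if_neg ht.not_ge

lemma norm_xRho_of_abs_le (hρ : 0 ≤ ρ) (ht : |t| ≤ tRho m₁ α ρ) : ‖xRho m₁ α φ ρ t‖ = ρ := by
  rw [xRho, if_pos ht, norm_mul, Complex.norm_real, Complex.norm_exp_ofReal_mul_I, mul_one,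
    Real.norm_of_nonneg hρ]

lemma deriv_xRho_of_lt_abs (ht : tRho m₁ α ρ < |t|) :
    deriv (xRho m₁ α φ ρ) t = deriv (xbarCE m₁ α 0 φ) t :=
  EventuallyEq.deriv_eq <| ((continuous_abs.tendsto t).eventually_const_lt ht).mono
    fun _ hs => xRho_of_lt_abs hs

lemma norm_deriv_xRho_of_abs_lt (hρ : 0 ≤ ρ) (ht : |t| < tRho m₁ α ρ) :
    ‖deriv (xRho m₁ α φ ρ) t‖ = ρ * |φ / (2 * tRho m₁ α ρ)| := by
  set τ := tRho m₁ α ρ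
  set ω := φ / (2 * τ)
  have hphase : HasDerivAt (fun s : ℝ => ω * (s + τ)) ω t := by
    simpa using ((hasDerivAt_id t).add_const τ).const_mul ω
  have harc := ((hphase.ofReal_comp.mul_const Complex.I).cexp).const_mul (ρ : ℂ)
  have hloc : xRho m₁ α φ ρ =ᶠ[𝓝 t]
      fun s => (ρ : ℂ) * Complex.exp (((ω * (s + τ) : ℝ) : ℂ) * Complex.I) :=
    ((continuous_abs.tendsto t).eventually_lt_const ht).mono fun _ hs => if_pos hs.le
  rw [(harc.congr_of_eventuallyEq hloc).deriv, norm_mul, norm_mul, norm_mul, Complex.norm_real,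
    Complex.norm_real, Complex.norm_exp_ofReal_mul_I, Complex.norm_I, one_mul, mul_one,
    Real.norm_of_nonneg hρ, Real.norm_eq_abs]

end Arc

section Maupertuis

variable {m₁ α : ℝ}

lemma exists_integral_kinetic_xRho_eq (hm : 0 < m₁) (hα : 0 < α) (hα₂ : α < 2) (φ T : ℝ) :
    ∃ a : ℝ, ∀ ρ, 0 < ρ → tRho m₁ α ρ < T →
      ∫ t in (-T)..T, 1 / 2 * ‖deriv (xRho m₁ α φ ρ) t‖ ^ 2 =
        (∫ t in (-T)..T, 1 / 2 * ‖deriv (xbarCE m₁ α 0 φ) t‖ ^ 2) + a * ρ ^ ((2 - α) / 2) := by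
  set μ := muKepler m₁ α with hμ_def
  set p := (2 - α) / (α + 2) with hp_def
  set c := (2 / (α + 2)) ^ 2 * μ ^ (4 / (α + 2)) / 2
  have hμ : 0 < μ := muKepler_pos hm hα
  have hp : 0 < p := div_pos (by linarith) (by linarith)
  refine ⟨φ ^ 2 * μ / 4 - 2 * c / (p * μ ^ p), fun ρ hρ hτT => ?_⟩
  set τ := tRho m₁ α ρ
  have hτ : 0 < τ := tRho_pos hm hα hρ
  have hbar : ∫ t in (-T)..T, 1 / 2 * ‖deriv (xbarCE m₁ α 0 φ) t‖ ^ 2 =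
      ∫ t in (-T)..T, c * |t| ^ (p - 1) :=
    integral_congr_ae <| (Measure.ae_ne volume 0).mono fun t ht _ =>
      half_mul_norm_deriv_xbarCE_sq hm hα 0 φ ht
  have hout : ∀ t, τ < |t| → 1 / 2 * ‖deriv (xRho m₁ α φ ρ) t‖ ^ 2 = c * |t| ^ (p - 1) :=
    fun t ht => by
      rw [deriv_xRho_of_lt_abs ht,
        half_mul_norm_deriv_xbarCE_sq hm hα 0 φ (abs_pos.1 (hτ.trans ht))]
  have hin : ∀ t, |t| < τ →
      1 / 2 * ‖deriv (xRho m₁ α φ ρ) t‖ ^ 2 = 1 / 2 * (ρ * |φ / (2 * τ)|) ^ 2 :=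
    fun t ht => by rw [norm_deriv_xRho_of_abs_lt hρ.le ht]
  have harc : 2 * τ * (1 / 2 * (ρ * |φ / (2 * τ)|) ^ 2) = φ ^ 2 / 4 * (ρ ^ 2 / τ) := by
    rw [mul_pow, sq_abs]
    field_simp
    ring
  rw [integral_eq_of_eqOn_abs_rpow hp hτ hτT hout hin, hbar, harc, sq_div_tRho hρ,
    tRho_rpow hm hα hρ.le, ← hμ_def, ← hp_def]
  field_simp
  ring

lemma exists_integral_potential_xRho_eq (hm : 0 < m₁) (hα : 0 < α) (hα₂ : α < 2) (φ T : ℝ) :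
    ∃ b : ℝ, ∀ ρ, 0 < ρ → tRho m₁ α ρ < T →
      ∫ t in (-T)..T, m₁ / (α * ‖xRho m₁ α φ ρ t‖ ^ α) =
        (∫ t in (-T)..T, m₁ / (α * ‖xbarCE m₁ α 0 φ t‖ ^ α)) + b * ρ ^ ((2 - α) / 2) := by
  set μ := muKepler m₁ α with hμ_def
  set p := (2 - α) / (α + 2) with hp_def
  set c := m₁ / (α * μ ^ (2 * α / (α + 2)))
  have hμ : 0 < μ := muKepler_pos hm hα
  have hp : 0 < p := div_pos (by linarith) (by linarith)
  refine ⟨2 * m₁ / (α * μ) - 2 * c / (p * μ ^ p), fun ρ hρ hτT => ?_⟩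
  set τ := tRho m₁ α ρ
  have hτ : 0 < τ := tRho_pos hm hα hρ
  have hbar : ∫ t in (-T)..T, m₁ / (α * ‖xbarCE m₁ α 0 φ t‖ ^ α) =
      ∫ t in (-T)..T, c * |t| ^ (p - 1) :=
    integral_congr fun t _ => div_mul_norm_xbarCE_rpow hm hα 0 φ t
  have hout : ∀ t, τ < |t| → m₁ / (α * ‖xRho m₁ α φ ρ t‖ ^ α) = c * |t| ^ (p - 1) :=
    fun t ht => by rw [xRho_of_lt_abs ht, div_mul_norm_xbarCE_rpow hm hα]
  have hin : ∀ t, |t| < τ → m₁ / (α * ‖xRho m₁ α φ ρ t‖ ^ α) = m₁ / (α * ρ ^ α) :=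
    fun t ht => by rw [norm_xRho_of_abs_le hρ.le ht.le]
  have harc : 2 * τ * (m₁ / (α * ρ ^ α)) = 2 * m₁ / α * (τ / ρ ^ α) := by ring
  rw [integral_eq_of_eqOn_abs_rpow hp hτ hτT hout hin, hbar, harc, tRho_div_rpow hρ,
    tRho_rpow hm hα hρ.le, ← hμ_def, ← hp_def]
  field_simp
  ring

end Maupertuis

theorem stmt_18_general (T m₁ α φ : ℝ) (hT : 0 < T) (hm : 0 < m₁) (hα1 : 1 ≤ α) (hα2 : α < 2) :
    (∃ C : ℝ, 0 < C ∧ ∃ ρ₀ : ℝ, 0 < ρ₀ ∧ ∀ ρ : ℝ, 0 < ρ → ρ < ρ₀ →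
      |MbarFun m₁ α T (xRho m₁ α φ ρ) - MbarFun m₁ α T (xbarCE m₁ α 0 φ)|
        ≤ C * ρ ^ ((2 - α) / 2)) ∧
    Filter.Tendsto (fun ρ : ℝ => MbarFun m₁ α T (xRho m₁ α φ ρ)) (𝓝[>] (0 : ℝ))
      (𝓝 (MbarFun m₁ α T (xbarCE m₁ α 0 φ))) := by
  have hα : 0 < α := by linarith
  have hs : 0 < (2 - α) / 2 := by linarith
  obtain ⟨a, hkin⟩ := exists_integral_kinetic_xRho_eq hm hα hα2 φ T
  obtain ⟨b, hpot⟩ := exists_integral_potential_xRho_eq hm hα hα2 φ T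
  have hρ₁ : 0 < (muKepler m₁ α * T) ^ (2 / (α + 2)) := by
    have := muKepler_pos hm hα
    positivity
  obtain ⟨C, hC, ρ₀, hρ₀, hle⟩ := exists_abs_sub_le_rpow_of_eq_mul
    (f := fun ρ => MbarFun m₁ α T (xRho m₁ α φ ρ)) hs.le hρ₁ fun ρ hρ hρT => by
      have hτT := tRho_lt_of_lt_rpow hm hα hT hρ.le hρT
      rw [MbarFun, hkin ρ hρ hτT, hpot ρ hρ hτT]
  exact ⟨⟨C, hC, ρ₀, hρ₀, hle⟩, tendsto_of_abs_sub_le_rpow hs hρ₀ hle⟩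

/-- Maupertuis value of the circular-arc modification of the collision-ejection
solution. -/
theorem stmt_18 (T m₁ α φ : ℝ) (hT : 0 < T) (hm : 0 < m₁) (hα1 : 1 ≤ α) (hα2 : α < 2)
    (hφ0 : 0 < φ) (hφ : φ ≤ 2 * Real.pi) :
    (∃ C : ℝ, 0 < C ∧ ∃ ρ₀ : ℝ, 0 < ρ₀ ∧ ∀ ρ : ℝ, 0 < ρ → ρ < ρ₀ →
      |MbarFun m₁ α T (xRho m₁ α φ ρ) - MbarFun m₁ α T (xbarCE m₁ α 0 φ)|
        ≤ C * ρ ^ ((2 - α) / 2)) ∧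
    Filter.Tendsto (fun ρ : ℝ => MbarFun m₁ α T (xRho m₁ α φ ρ)) (𝓝[>] (0 : ℝ))
      (𝓝 (MbarFun m₁ α T (xbarCE m₁ α 0 φ))) :=
  stmt_18_general T m₁ α φ hT hm hα1 hα2
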